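/- arXiv:2201.12584 — 7 statements merged into one kernel-verified Lean document; each statement's English description precedes it below -/
import Mathlib

section
/- Let B₁ be a real m×n matrix and B₂ be a real n×p matrix with B₁B₂ = 0, let L = B₁ᵀB₁ + B₂B₂ᵀ, and let H = Σ_{l=0}^{L₁} α_l (B₁ᵀB₁)^l + Σ_{l=0}^{L₂} β_l (B₂B₂ᵀ)^l be a simplicial convolutional filter. If v ∈ ℝⁿ lies in the gradient subspace, i.e. v = B₁ᵀw for some w ∈ ℝᵐ, and v is an eigenvector of L with Lv = λ·v, then Hv = (β₀ + Σ_{l=0}^{L₁} α_l λ^l)·v. -/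
/-!
On the gradient subspace `im B₁ᵀ` the lower Laplacian `B₂B₂ᵀ` vanishes, because
`B₂ᵀB₁ᵀ = (B₁B₂)ᵀ = 0`. Hence an eigenvector `v` of `L` in that subspace is an eigenvector of
`B₁ᵀB₁` with the same eigenvalue `λ` and of `B₂B₂ᵀ` with eigenvalue `0`, and each of the two
matrix polynomials making up the filter acts on `v` as the scalar polynomial evaluated at the
corresponding eigenvalue: `Σ α_l λ^l` and `Σ β_l 0^l = β₀`.
-/

open Matrix Finset

/-- A simplicial convolutional filter built from incidence matrices `B₁`, `B₂`:
`H = Σ_{l=0}^{L₁} α l • (B₁ᵀB₁)^l + Σ_{l=0}^{L₂} β l • (B₂B₂ᵀ)^l`. -/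
noncomputable def scFilter {m n p : ℕ} (B₁ : Matrix (Fin m) (Fin n) ℝ)
    (B₂ : Matrix (Fin n) (Fin p) ℝ) (L₁ L₂ : ℕ) (α β : ℕ → ℝ) :
    Matrix (Fin n) (Fin n) ℝ :=
  (∑ l ∈ Finset.range (L₁ + 1), α l • (B₁ᵀ * B₁) ^ l)
    + ∑ l ∈ Finset.range (L₂ + 1), β l • (B₂ * B₂ᵀ) ^ l

namespace Matrix

variable {ι R : Type*} [Fintype ι] [CommSemiring R]

theorem pow_mulVec_of_mulVec_eq_smul [DecidableEq ι] {A : Matrix ι ι R} {v : ι → R} {c : R}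
    (h : A *ᵥ v = c • v) (l : ℕ) : (A ^ l) *ᵥ v = c ^ l • v := by
  induction l with
  | zero => simp
  | succ k ih => rw [pow_succ', ← mulVec_mulVec, ih, mulVec_smul, h, smul_smul, pow_succ]

theorem sum_smul_pow_mulVec_of_mulVec_eq_smul [DecidableEq ι] {A : Matrix ι ι R} {v : ι → R}
    {c : R} (h : A *ᵥ v = c • v) (s : Finset ℕ) (a : ℕ → R) :
    (∑ l ∈ s, a l • A ^ l) *ᵥ v = (∑ l ∈ s, a l * c ^ l) • v := by
  simp only [sum_mulVec, smul_mulVec, pow_mulVec_of_mulVec_eq_smul h, smul_smul, sum_smul]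

theorem mul_transpose_mulVec_transpose_mulVec_eq_zero {κ μ : Type*} [Fintype κ] [Fintype μ]
    {B₁ : Matrix κ ι R} {B₂ : Matrix ι μ R} (hB : B₁ * B₂ = 0) (w : κ → R) :
    (B₂ * B₂ᵀ) *ᵥ (B₁ᵀ *ᵥ w) = 0 := by
  rw [← mulVec_mulVec, mulVec_mulVec w, ← transpose_mul, hB, transpose_zero, zero_mulVec,
    mulVec_zero]

end Matrix

theorem Finset.sum_range_succ_mul_zero_pow {R : Type*} [Semiring R] (b : ℕ → R) (L : ℕ) :
    ∑ l ∈ range (L + 1), b l * 0 ^ l = b 0 := by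
  rw [sum_range_succ']
  simp

theorem filter_response_gradient
    {m n p : ℕ} (B₁ : Matrix (Fin m) (Fin n) ℝ) (B₂ : Matrix (Fin n) (Fin p) ℝ)
    (hB : B₁ * B₂ = 0) (L₁ L₂ : ℕ) (α β : ℕ → ℝ) (v : Fin n → ℝ)
    (w : Fin m → ℝ) (hv : v = B₁ᵀ.mulVec w) (lam : ℝ)
    (heig : (B₁ᵀ * B₁ + B₂ * B₂ᵀ).mulVec v = lam • v) :
    (scFilter B₁ B₂ L₁ L₂ α β).mulVec v =
      (β 0 + ∑ l ∈ Finset.range (L₁ + 1), α l * lam ^ l) • v := by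
  have hdown : (B₂ * B₂ᵀ) *ᵥ v = (0 : ℝ) • v := by
    rw [zero_smul, hv, mul_transpose_mulVec_transpose_mulVec_eq_zero hB]
  have hup : (B₁ᵀ * B₁) *ᵥ v = lam • v := by
    rwa [add_mulVec, hdown, zero_smul, add_zero] at heig
  rw [scFilter, add_mulVec, sum_smul_pow_mulVec_of_mulVec_eq_smul hup,
    sum_smul_pow_mulVec_of_mulVec_eq_smul hdown, sum_range_succ_mul_zero_pow, add_comm, add_smul]
end

section
/- Let B₁ be a real m×n matrix and B₂ be a real n×p matrix with B₁B₂ = 0, let L = B₁ᵀB₁ + B₂B₂ᵀ, and let H = Σ_{l=0}^{L₁} α_l (B₁ᵀB₁)^l + Σ_{l=0}^{L₂} β_l (B₂B₂ᵀ)^l be a simplicial convolutional filter. If v ∈ ℝⁿ lies in the curl subspace, i.e. v = B₂z for some z ∈ ℝᵖ, and v is an eigenvector of L with Lv = λ·v, then Hv = (α₀ + Σ_{l=0}^{L₂} β_l λ^l)·v. -/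
open Matrix Finset

lemma sum_mulVec_aux {n : ℕ} {ι : Type*} (s : Finset ι) (f : ι → Matrix (Fin n) (Fin n) ℝ)
    (v : Fin n → ℝ) : (∑ i ∈ s, f i).mulVec v = ∑ i ∈ s, (f i).mulVec v := by
  classical
  induction s using Finset.induction with
  | empty => simp
  | insert a s h ih => simp [Finset.sum_insert h, Matrix.add_mulVec, ih]

theorem filter_response_curl
    {m n p : ℕ} (B₁ : Matrix (Fin m) (Fin n) ℝ) (B₂ : Matrix (Fin n) (Fin p) ℝ)
    (hB : B₁ * B₂ = 0) (L₁ L₂ : ℕ) (α β : ℕ → ℝ) (v : Fin n → ℝ)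
    (z : Fin p → ℝ) (hv : v = B₂.mulVec z) (lam : ℝ)
    (heig : (B₁ᵀ * B₁ + B₂ * B₂ᵀ).mulVec v = lam • v) :
    (scFilter B₁ B₂ L₁ L₂ α β).mulVec v =
      (α 0 + ∑ l ∈ Finset.range (L₂ + 1), β l * lam ^ l) • v := by
  have hdown : (B₁ᵀ * B₁).mulVec v = 0 := by
    have h0 : B₁.mulVec v = 0 := by rw [hv, Matrix.mulVec_mulVec, hB]; simp
    rw [← Matrix.mulVec_mulVec, h0]; simp
  have hup : (B₂ * B₂ᵀ).mulVec v = lam • v := by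
    have := heig
    rw [Matrix.add_mulVec, hdown, zero_add] at this
    exact this
  have hdownpow : ∀ l, ((B₁ᵀ * B₁) ^ l).mulVec v = if l = 0 then v else 0 := by
    intro l
    induction l with
    | zero => simp
    | succ k ih =>
      rw [pow_succ, ← Matrix.mulVec_mulVec, hdown]
      simp
  have huppow : ∀ l, ((B₂ * B₂ᵀ) ^ l).mulVec v = lam ^ l • v := by
    intro l
    induction l with
    | zero => simp
    | succ k ih =>
      rw [pow_succ', ← Matrix.mulVec_mulVec, ih, Matrix.mulVec_smul, hup,
        smul_smul]
      ring_nf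
  unfold scFilter
  rw [Matrix.add_mulVec]
  have h1 : (∑ l ∈ Finset.range (L₁ + 1), α l • (B₁ᵀ * B₁) ^ l).mulVec v = α 0 • v := by
    rw [sum_mulVec_aux]
    simp only [Matrix.smul_mulVec, hdownpow, smul_ite, smul_zero]
    simp
  have h2 : (∑ l ∈ Finset.range (L₂ + 1), β l • (B₂ * B₂ᵀ) ^ l).mulVec v
      = (∑ l ∈ Finset.range (L₂ + 1), β l * lam ^ l) • v := by
    rw [sum_mulVec_aux, Finset.sum_smul]
    exact Finset.sum_congr rfl (fun l _ => by
      rw [Matrix.smul_mulVec, huppow l, smul_smul])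
  rw [h1, h2, add_smul]
end

section
/- Let B₁ be a real m×n matrix and B₂ be a real n×p matrix with B₁B₂ = 0. Let σ₀, σ₁, σ₂ be permutations of the index sets of sizes m, n, p respectively, with permutation matrices P₀, P₁, P₂, and set B̃₁ = P₀ᵀB₁P₁ and B̃₂ = P₁ᵀB₂P₂. Then B̃₁B̃₂ = 0, and for any coefficients α_0,…,α_{L₁}, β_0,…,β_{L₂}, the simplicial convolutional filter built from B̃₁, B̃₂ satisfies H(B̃₁,B̃₂) = P₁ᵀ H(B₁,B₂) P₁, where H(B₁,B₂) = Σ_{l=0}^{L₁} α_l (B₁ᵀB₁)^l + Σ_{l=0}^{L₂} β_l (B₂B₂ᵀ)^l. -/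
/-!
Conjugating by permutation matrices, `B ↦ P₀ᵀ B P₁`, is just reindexing rows and columns. Reindexing
is compatible with products and transposes, and on square matrices it is an algebra isomorphism, so
it commutes with the polynomial expressions defining the filter and preserves `B₁ B₂ = 0`.
-/

open Matrix Finset

/-- The permutation matrix of a permutation `σ`: `P i j = 1` iff `j = σ i`. -/
def permMatrix {k : ℕ} (σ : Equiv.Perm (Fin k)) : Matrix (Fin k) (Fin k) ℝ :=
  Matrix.of fun i j => if j = σ i then 1 else 0

lemma permMatrix_eq_toMatrix_toPEquiv {k : ℕ} (σ : Equiv.Perm (Fin k)) :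
    permMatrix σ = σ.toPEquiv.toMatrix := by
  ext i j
  simp [permMatrix, PEquiv.toMatrix_apply, eq_comm]

lemma transpose_permMatrix_mul_mul_permMatrix {k l : ℕ} (σ : Equiv.Perm (Fin k))
    (τ : Equiv.Perm (Fin l)) (A : Matrix (Fin k) (Fin l) ℝ) :
    (permMatrix σ)ᵀ * A * permMatrix τ = reindex σ τ A := by
  rw [permMatrix_eq_toMatrix_toPEquiv, permMatrix_eq_toMatrix_toPEquiv, ← PEquiv.toMatrix_symm,
    ← Equiv.toPEquiv_symm, PEquiv.toMatrix_toPEquiv_mul, PEquiv.mul_toMatrix_toPEquiv,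
    submatrix_submatrix]
  rfl

lemma reindex_mul_reindex {l m n l' m' n' R : Type*} [Fintype m] [Fintype m'] [AddCommMonoid R]
    [Mul R] (eₗ : l ≃ l') (eₘ : m ≃ m') (eₙ : n ≃ n') (M : Matrix l m R) (N : Matrix m n R) :
    reindex eₗ eₘ M * reindex eₘ eₙ N = reindex eₗ eₙ (M * N) :=
  submatrix_mul_equiv M N _ _ _

lemma scFilter_reindex {m n p m' n' p' : ℕ} (e₀ : Fin m ≃ Fin m') (e₁ : Fin n ≃ Fin n')
    (e₂ : Fin p ≃ Fin p') (B₁ : Matrix (Fin m) (Fin n) ℝ) (B₂ : Matrix (Fin n) (Fin p) ℝ)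
    (L₁ L₂ : ℕ) (α β : ℕ → ℝ) :
    scFilter (reindex e₀ e₁ B₁) (reindex e₁ e₂ B₂) L₁ L₂ α β =
      reindex e₁ e₁ (scFilter B₁ B₂ L₁ L₂ α β) := by
  have lower : (reindex e₀ e₁ B₁)ᵀ * reindex e₀ e₁ B₁ = reindexAlgEquiv ℝ ℝ e₁ (B₁ᵀ * B₁) := by
    rw [coe_reindexAlgEquiv, transpose_reindex, reindex_mul_reindex]
  have upper : reindex e₁ e₂ B₂ * (reindex e₁ e₂ B₂)ᵀ = reindexAlgEquiv ℝ ℝ e₁ (B₂ * B₂ᵀ) := by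
    rw [coe_reindexAlgEquiv, transpose_reindex, reindex_mul_reindex]
  rw [← coe_reindexAlgEquiv ℝ ℝ, scFilter, scFilter, lower, upper]
  simp only [map_add, map_sum, map_smul, map_pow]

theorem filter_permutation_equivariance
    {m n p : ℕ} (B₁ : Matrix (Fin m) (Fin n) ℝ) (B₂ : Matrix (Fin n) (Fin p) ℝ)
    (hB : B₁ * B₂ = 0)
    (σ₀ : Equiv.Perm (Fin m)) (σ₁ : Equiv.Perm (Fin n)) (σ₂ : Equiv.Perm (Fin p))
    (L₁ L₂ : ℕ) (α β : ℕ → ℝ) :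
    ((permMatrix σ₀)ᵀ * B₁ * permMatrix σ₁) * ((permMatrix σ₁)ᵀ * B₂ * permMatrix σ₂) = 0 ∧
    scFilter ((permMatrix σ₀)ᵀ * B₁ * permMatrix σ₁)
        ((permMatrix σ₁)ᵀ * B₂ * permMatrix σ₂) L₁ L₂ α β =
      (permMatrix σ₁)ᵀ * scFilter B₁ B₂ L₁ L₂ α β * permMatrix σ₁ := by
  simp only [transpose_permMatrix_mul_mul_permMatrix]
  refine ⟨?_, scFilter_reindex σ₀ σ₁ σ₂ B₁ B₂ L₁ L₂ α β⟩
  rw [reindex_mul_reindex, hB]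
  rfl
end

section
/- (Permutation equivariance of the simplicial complex filter bank.) Let B₁ be a real m×n matrix and B₂ be a real n×p matrix with B₁B₂ = 0, let H₀, H₁, H₂ be simplicial convolutional filters built from B₁, B₂ with coefficient sets (α_{0,l}, β_{0,l}), (α_{1,l}, β_{1,l}), (α_{2,l}, β_{2,l}), and for inputs x⁰ ∈ ℝᵐ, x¹ ∈ ℝⁿ, x² ∈ ℝᵖ define the filter-bank output y = H₀B₁ᵀx⁰ + H₁x¹ + H₂B₂x². Let σ₀, σ₁, σ₂ be permutations of the index sets of sizes m, n, p with permutation matrices P₀, P₁, P₂, and define the permuted incidence matrices B̃₁ = P₀ᵀB₁P₁, B̃₂ = P₁ᵀB₂P₂, the permuted filters H̃ᵢ built from B̃₁, B̃₂ with the same coefficients, and the permuted inputs x̃⁰ = P₀ᵀx⁰, x̃¹ = P₁ᵀx¹, x̃² = P₂ᵀx². Then the permuted filter-bank output ỹ = H̃₀B̃₁ᵀx̃⁰ + H̃₁x̃¹ + H̃₂B̃₂x̃² satisfies ỹ = P₁ᵀy. -/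
open Matrix Finset

/-!
Relabelling the simplices by orthogonal matrices `Q₀, Q₁, Q₂` (permutation matrices among them)
turns `B₁ᵀB₁` and `B₂B₂ᵀ` into their conjugates by `Q₁`, since `Q₀` and `Q₂` cancel in the Gram
products. Every filter, being a polynomial in these two matrices, is conjugated by `Q₁` as well,
and in each of the three branches of the filter bank the factors `Q₀`, `Q₁`, `Q₂` cancel against
the relabelled input, leaving the output multiplied by `Q₁ᵀ`.
-/

section Orthogonal

variable {R : Type*} [CommRing R] {k m n : Type*} [Fintype k] [Fintype m] [Fintype n]
  [DecidableEq k]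

lemma Matrix.mul_mul_mulVec_transpose_mulVec {l : Type*} (A : Matrix l m R) (C : Matrix m k R)
    {P : Matrix k k R} (hP : P * Pᵀ = 1) (x : k → R) :
    (A * C * P) *ᵥ (Pᵀ *ᵥ x) = A *ᵥ (C *ᵥ x) := by
  rw [mulVec_mulVec, mulVec_mulVec, Matrix.mul_assoc (A * C), hP, Matrix.mul_one]

lemma Matrix.transpose_mul_self_conj {P : Matrix k k R} (hP : P * Pᵀ = 1) (B : Matrix k n R)
    (Q : Matrix n n R) : (Pᵀ * B * Q)ᵀ * (Pᵀ * B * Q) = Qᵀ * (Bᵀ * B) * Q := by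
  simp only [transpose_mul, transpose_transpose, Matrix.mul_assoc]
  rw [← Matrix.mul_assoc P, hP, Matrix.one_mul]

lemma Matrix.mul_transpose_self_conj (P : Matrix m m R) (B : Matrix m k R) {Q : Matrix k k R}
    (hQ : Q * Qᵀ = 1) : (Pᵀ * B * Q) * (Pᵀ * B * Q)ᵀ = Pᵀ * (B * Bᵀ) * P := by
  simp only [transpose_mul, transpose_transpose, Matrix.mul_assoc]
  rw [← Matrix.mul_assoc Q, hQ, Matrix.one_mul]

lemma Matrix.conj_pow_of_mul_transpose_eq_one {Q : Matrix k k R} (hQ : Q * Qᵀ = 1)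
    (M : Matrix k k R) (l : ℕ) : (Qᵀ * M * Q) ^ l = Qᵀ * M ^ l * Q :=
  Units.conj_pow' ⟨Q, Qᵀ, hQ, mul_eq_one_comm.mp hQ⟩ M l

lemma Matrix.sum_smul_conj_pow {Q : Matrix k k R} (hQ : Q * Qᵀ = 1) (M : Matrix k k R)
    (s : Finset ℕ) (a : ℕ → R) :
    ∑ l ∈ s, a l • (Qᵀ * M * Q) ^ l = Qᵀ * (∑ l ∈ s, a l • M ^ l) * Q := by
  simp only [conj_pow_of_mul_transpose_eq_one hQ, Matrix.mul_sum, Matrix.sum_mul,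
    Matrix.mul_smul, Matrix.smul_mul]

end Orthogonal

section Filter

variable {m n p : ℕ} {Q₀ : Matrix (Fin m) (Fin m) ℝ} {Q₁ : Matrix (Fin n) (Fin n) ℝ}
  {Q₂ : Matrix (Fin p) (Fin p) ℝ}

lemma scFilter_conj (hQ₀ : Q₀ * Q₀ᵀ = 1) (hQ₁ : Q₁ * Q₁ᵀ = 1) (hQ₂ : Q₂ * Q₂ᵀ = 1)
    (B₁ : Matrix (Fin m) (Fin n) ℝ) (B₂ : Matrix (Fin n) (Fin p) ℝ) (L₁ L₂ : ℕ) (α β : ℕ → ℝ) :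
    scFilter (Q₀ᵀ * B₁ * Q₁) (Q₁ᵀ * B₂ * Q₂) L₁ L₂ α β
      = Q₁ᵀ * scFilter B₁ B₂ L₁ L₂ α β * Q₁ := by
  rw [scFilter, scFilter, transpose_mul_self_conj hQ₀, mul_transpose_self_conj _ _ hQ₂,
    sum_smul_conj_pow hQ₁, sum_smul_conj_pow hQ₁, Matrix.mul_add, Matrix.add_mul]

lemma filter_bank_orthogonal_equivariance
    (hQ₀ : Q₀ * Q₀ᵀ = 1) (hQ₁ : Q₁ * Q₁ᵀ = 1) (hQ₂ : Q₂ * Q₂ᵀ = 1)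
    (B₁ : Matrix (Fin m) (Fin n) ℝ) (B₂ : Matrix (Fin n) (Fin p) ℝ) (L₁ L₂ : ℕ)
    (α₀ β₀ α₁ β₁ α₂ β₂ : ℕ → ℝ) (x0 : Fin m → ℝ) (x1 : Fin n → ℝ) (x2 : Fin p → ℝ) :
    (scFilter (Q₀ᵀ * B₁ * Q₁) (Q₁ᵀ * B₂ * Q₂) L₁ L₂ α₀ β₀) *ᵥ
          ((Q₀ᵀ * B₁ * Q₁)ᵀ *ᵥ (Q₀ᵀ *ᵥ x0))
      + (scFilter (Q₀ᵀ * B₁ * Q₁) (Q₁ᵀ * B₂ * Q₂) L₁ L₂ α₁ β₁) *ᵥ (Q₁ᵀ *ᵥ x1)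
      + (scFilter (Q₀ᵀ * B₁ * Q₁) (Q₁ᵀ * B₂ * Q₂) L₁ L₂ α₂ β₂) *ᵥ
          ((Q₁ᵀ * B₂ * Q₂) *ᵥ (Q₂ᵀ *ᵥ x2)) =
    Q₁ᵀ *ᵥ ((scFilter B₁ B₂ L₁ L₂ α₀ β₀) *ᵥ (B₁ᵀ *ᵥ x0)
        + (scFilter B₁ B₂ L₁ L₂ α₁ β₁) *ᵥ x1
        + (scFilter B₁ B₂ L₁ L₂ α₂ β₂) *ᵥ (B₂ *ᵥ x2)) := by
  have hB₁ : (Q₀ᵀ * B₁ * Q₁)ᵀ = Q₁ᵀ * B₁ᵀ * Q₀ := by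
    simp only [transpose_mul, transpose_transpose, Matrix.mul_assoc]
  simp only [scFilter_conj hQ₀ hQ₁ hQ₂, hB₁, mul_mul_mulVec_transpose_mulVec _ _ hQ₀,
    mul_mul_mulVec_transpose_mulVec _ _ hQ₁, mul_mul_mulVec_transpose_mulVec _ _ hQ₂, mulVec_add]

end Filter

lemma permMatrix_eq {k : ℕ} (σ : Equiv.Perm (Fin k)) : permMatrix σ = σ.permMatrix ℝ := by
  ext i j
  simp [permMatrix, PEquiv.toMatrix_apply, eq_comm]

lemma permMatrix_mul_transpose {k : ℕ} (σ : Equiv.Perm (Fin k)) :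
    permMatrix σ * (permMatrix σ)ᵀ = 1 := by
  rw [permMatrix_eq, transpose_permMatrix, ← permMatrix_mul, inv_mul_cancel, permMatrix_one]

theorem filter_bank_permutation_equivariance_general
    {m n p : ℕ} (B₁ : Matrix (Fin m) (Fin n) ℝ) (B₂ : Matrix (Fin n) (Fin p) ℝ)
    (L₁ L₂ : ℕ)
    (α₀ β₀ α₁ β₁ α₂ β₂ : ℕ → ℝ)
    (x0 : Fin m → ℝ) (x1 : Fin n → ℝ) (x2 : Fin p → ℝ)
    (σ₀ : Equiv.Perm (Fin m)) (σ₁ : Equiv.Perm (Fin n)) (σ₂ : Equiv.Perm (Fin p)) :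
    (scFilter ((permMatrix σ₀)ᵀ * B₁ * permMatrix σ₁)
          ((permMatrix σ₁)ᵀ * B₂ * permMatrix σ₂) L₁ L₂ α₀ β₀).mulVec
        (((permMatrix σ₀)ᵀ * B₁ * permMatrix σ₁)ᵀ.mulVec ((permMatrix σ₀)ᵀ.mulVec x0))
      + (scFilter ((permMatrix σ₀)ᵀ * B₁ * permMatrix σ₁)
          ((permMatrix σ₁)ᵀ * B₂ * permMatrix σ₂) L₁ L₂ α₁ β₁).mulVec
        ((permMatrix σ₁)ᵀ.mulVec x1)
      + (scFilter ((permMatrix σ₀)ᵀ * B₁ * permMatrix σ₁)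
          ((permMatrix σ₁)ᵀ * B₂ * permMatrix σ₂) L₁ L₂ α₂ β₂).mulVec
        (((permMatrix σ₁)ᵀ * B₂ * permMatrix σ₂).mulVec ((permMatrix σ₂)ᵀ.mulVec x2)) =
    (permMatrix σ₁)ᵀ.mulVec
      ((scFilter B₁ B₂ L₁ L₂ α₀ β₀).mulVec (B₁ᵀ.mulVec x0)
        + (scFilter B₁ B₂ L₁ L₂ α₁ β₁).mulVec x1
        + (scFilter B₁ B₂ L₁ L₂ α₂ β₂).mulVec (B₂.mulVec x2)) := by
  exact filter_bank_orthogonal_equivariance (permMatrix_mul_transpose σ₀)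
    (permMatrix_mul_transpose σ₁) (permMatrix_mul_transpose σ₂) B₁ B₂ L₁ L₂ α₀ β₀ α₁ β₁ α₂ β₂
    x0 x1 x2

theorem filter_bank_permutation_equivariance
    {m n p : ℕ} (B₁ : Matrix (Fin m) (Fin n) ℝ) (B₂ : Matrix (Fin n) (Fin p) ℝ)
    (hB : B₁ * B₂ = 0) (L₁ L₂ : ℕ)
    (α₀ β₀ α₁ β₁ α₂ β₂ : ℕ → ℝ)
    (x0 : Fin m → ℝ) (x1 : Fin n → ℝ) (x2 : Fin p → ℝ)
    (σ₀ : Equiv.Perm (Fin m)) (σ₁ : Equiv.Perm (Fin n)) (σ₂ : Equiv.Perm (Fin p)) :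
    (scFilter ((permMatrix σ₀)ᵀ * B₁ * permMatrix σ₁)
          ((permMatrix σ₁)ᵀ * B₂ * permMatrix σ₂) L₁ L₂ α₀ β₀).mulVec
        (((permMatrix σ₀)ᵀ * B₁ * permMatrix σ₁)ᵀ.mulVec ((permMatrix σ₀)ᵀ.mulVec x0))
      + (scFilter ((permMatrix σ₀)ᵀ * B₁ * permMatrix σ₁)
          ((permMatrix σ₁)ᵀ * B₂ * permMatrix σ₂) L₁ L₂ α₁ β₁).mulVec
        ((permMatrix σ₁)ᵀ.mulVec x1)
      + (scFilter ((permMatrix σ₀)ᵀ * B₁ * permMatrix σ₁)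
          ((permMatrix σ₁)ᵀ * B₂ * permMatrix σ₂) L₁ L₂ α₂ β₂).mulVec
        (((permMatrix σ₁)ᵀ * B₂ * permMatrix σ₂).mulVec ((permMatrix σ₂)ᵀ.mulVec x2)) =
    (permMatrix σ₁)ᵀ.mulVec
      ((scFilter B₁ B₂ L₁ L₂ α₀ β₀).mulVec (B₁ᵀ.mulVec x0)
        + (scFilter B₁ B₂ L₁ L₂ α₁ β₁).mulVec x1
        + (scFilter B₁ B₂ L₁ L₂ α₂ β₂).mulVec (B₂.mulVec x2)) :=
  filter_bank_permutation_equivariance_general B₁ B₂ L₁ L₂ α₀ β₀ α₁ β₁ α₂ β₂ x0 x1 x2 σ₀ σ₁ σ₂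
end

section
/- Let B₁ be a real m×n matrix and B₂ be a real n×p matrix with B₁B₂ = 0. Let D₀, D₁, D₂ be diagonal matrices of sizes m, n, p respectively whose diagonal entries are all +1 or −1, and set B̃₁ = D₀B₁D₁ and B̃₂ = D₁B₂D₂. Then B̃₁B̃₂ = 0, and for any coefficients α_0,…,α_{L₁}, β_0,…,β_{L₂}, the simplicial convolutional filter built from B̃₁, B̃₂ satisfies H(B̃₁,B̃₂) = D₁ H(B₁,B₂) D₁, where H(B₁,B₂) = Σ_{l=0}^{L₁} α_l (B₁ᵀB₁)^l + Σ_{l=0}^{L₂} β_l (B₂B₂ᵀ)^l. -/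
/-! Reorienting by sign matrices conjugates both Gram matrices `B₁ᵀB₁` and `B₂B₂ᵀ` by the
involution `D₁`, and conjugation by an involution is a ring automorphism, so it passes through
every matrix polynomial in them. -/

open Matrix Finset

theorem Matrix.diagonal_mul_diagonal_self_of_sign {ι R : Type*} [Fintype ι] [DecidableEq ι]
    [Ring R] {d : ι → R} (hd : ∀ i, d i = 1 ∨ d i = -1) :
    diagonal d * diagonal d = 1 := by
  rw [diagonal_mul_diagonal, ← diagonal_one]
  congr 1
  funext i
  rcases hd i with h | h <;> simp [h]

theorem pow_conj_of_mul_self_eq_one {M : Type*} [Monoid M] {a : M} (ha : a * a = 1) (x : M)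
    (n : ℕ) : (a * x * a) ^ n = a * x ^ n * a :=
  Units.conj_pow ⟨a, a, ha, ha⟩ x n

theorem sum_smul_pow_conj_of_mul_self_eq_one {R A ι : Type*} [CommSemiring R] [Semiring A]
    [Algebra R A] {a : A} (ha : a * a = 1) (x : A) (s : Finset ι) (c : ι → R) (e : ι → ℕ) :
    ∑ l ∈ s, c l • (a * x * a) ^ e l = a * (∑ l ∈ s, c l • x ^ e l) * a := by
  rw [Finset.mul_sum, Finset.sum_mul]
  refine Finset.sum_congr rfl fun l _ => ?_
  rw [pow_conj_of_mul_self_eq_one ha, mul_smul_comm, smul_mul_assoc]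

section Reorientation

variable {ι κ ν R : Type*} [Fintype ι] [Fintype κ] [Fintype ν] [DecidableEq ι] [DecidableEq κ]
  [DecidableEq ν] [CommSemiring R]

theorem Matrix.transpose_mul_self_diagonal_conj {d₀ : ι → R} (h₀ : diagonal d₀ * diagonal d₀ = 1)
    (B : Matrix ι κ R) (d₁ : κ → R) :
    (diagonal d₀ * B * diagonal d₁)ᵀ * (diagonal d₀ * B * diagonal d₁)
      = diagonal d₁ * (Bᵀ * B) * diagonal d₁ := by
  simp only [transpose_mul, diagonal_transpose, Matrix.mul_assoc]
  rw [← Matrix.mul_assoc (diagonal d₀) (diagonal d₀), h₀, Matrix.one_mul]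

theorem Matrix.mul_transpose_self_diagonal_conj {d₂ : ν → R} (h₂ : diagonal d₂ * diagonal d₂ = 1)
    (B : Matrix κ ν R) (d₁ : κ → R) :
    (diagonal d₁ * B * diagonal d₂) * (diagonal d₁ * B * diagonal d₂)ᵀ
      = diagonal d₁ * (B * Bᵀ) * diagonal d₁ := by
  simp only [transpose_mul, diagonal_transpose, Matrix.mul_assoc]
  rw [← Matrix.mul_assoc (diagonal d₂) (diagonal d₂), h₂, Matrix.one_mul]

theorem Matrix.diagonal_conj_mul_diagonal_conj_eq_zero {B₁ : Matrix ι κ R} {B₂ : Matrix κ ν R}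
    (hB : B₁ * B₂ = 0) (d₀ : ι → R) {d₁ : κ → R} (h₁ : diagonal d₁ * diagonal d₁ = 1)
    (d₂ : ν → R) :
    (diagonal d₀ * B₁ * diagonal d₁) * (diagonal d₁ * B₂ * diagonal d₂) = 0 := by
  simp only [Matrix.mul_assoc]
  rw [← Matrix.mul_assoc (diagonal d₁) (diagonal d₁), h₁, Matrix.one_mul,
    ← Matrix.mul_assoc B₁, hB, Matrix.zero_mul, Matrix.mul_zero]

end Reorientation

theorem scFilter_eq_conj_of_gram_eq_conj {m m' n p p' : ℕ} {B₁ : Matrix (Fin m) (Fin n) ℝ}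
    {B₂ : Matrix (Fin n) (Fin p) ℝ} {B₁' : Matrix (Fin m') (Fin n) ℝ}
    {B₂' : Matrix (Fin n) (Fin p') ℝ} {D : Matrix (Fin n) (Fin n) ℝ} (hD : D * D = 1)
    (h₁ : B₁'ᵀ * B₁' = D * (B₁ᵀ * B₁) * D) (h₂ : B₂' * B₂'ᵀ = D * (B₂ * B₂ᵀ) * D)
    (L₁ L₂ : ℕ) (α β : ℕ → ℝ) :
    scFilter B₁' B₂' L₁ L₂ α β = D * scFilter B₁ B₂ L₁ L₂ α β * D := by
  rw [scFilter, scFilter, h₁, h₂, sum_smul_pow_conj_of_mul_self_eq_one hD,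
    sum_smul_pow_conj_of_mul_self_eq_one hD, Matrix.mul_add, Matrix.add_mul]

theorem filter_orientation_equivariance
    {m n p : ℕ} (B₁ : Matrix (Fin m) (Fin n) ℝ) (B₂ : Matrix (Fin n) (Fin p) ℝ)
    (hB : B₁ * B₂ = 0)
    (d₀ : Fin m → ℝ) (d₁ : Fin n → ℝ) (d₂ : Fin p → ℝ)
    (hd₀ : ∀ i, d₀ i = 1 ∨ d₀ i = -1)
    (hd₁ : ∀ i, d₁ i = 1 ∨ d₁ i = -1)
    (hd₂ : ∀ i, d₂ i = 1 ∨ d₂ i = -1)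
    (L₁ L₂ : ℕ) (α β : ℕ → ℝ) :
    (Matrix.diagonal d₀ * B₁ * Matrix.diagonal d₁) *
        (Matrix.diagonal d₁ * B₂ * Matrix.diagonal d₂) = 0 ∧
    scFilter (Matrix.diagonal d₀ * B₁ * Matrix.diagonal d₁)
        (Matrix.diagonal d₁ * B₂ * Matrix.diagonal d₂) L₁ L₂ α β =
      Matrix.diagonal d₁ * scFilter B₁ B₂ L₁ L₂ α β * Matrix.diagonal d₁ := by
  have h₀ := diagonal_mul_diagonal_self_of_sign hd₀
  have h₁ := diagonal_mul_diagonal_self_of_sign hd₁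
  have h₂ := diagonal_mul_diagonal_self_of_sign hd₂
  exact ⟨diagonal_conj_mul_diagonal_conj_eq_zero hB d₀ h₁ d₂,
    scFilter_eq_conj_of_gram_eq_conj h₁ (transpose_mul_self_diagonal_conj h₀ B₁ d₁)
      (mul_transpose_self_diagonal_conj h₂ B₂ d₁) L₁ L₂ α β⟩
end

section
/- Let B₁ be a real m×n matrix and B₂ be a real n×p matrix with B₁B₂ = 0, let L = B₁ᵀB₁ + B₂B₂ᵀ, let H₀, H₁, H₂ be simplicial convolutional filters built from B₁, B₂ with coefficient sets (α_{i,0},…,α_{i,L₁}; β_{i,0},…,β_{i,L₂}) for i = 0,1,2, and for inputs x⁰ ∈ ℝᵐ, x¹ ∈ ℝⁿ, x² ∈ ℝᵖ let y = H₀B₁ᵀx⁰ + H₁x¹ + H₂B₂x² be the filter-bank output. If v ∈ ℝⁿ is harmonic, i.e. Lv = 0, then the projection of the output onto v satisfies vᵀy = (α_{1,0} + β_{1,0})·(vᵀx¹); in particular the signals from the adjacent levels x⁰ and x² do not contribute at the harmonic frequencies. -/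
open Matrix Finset

private lemma vecMul_sum' {n : ℕ} {ι : Type*} (v : Fin n → ℝ) (s : Finset ι)
    (A : ι → Matrix (Fin n) (Fin n) ℝ) :
    v ᵥ* (∑ i ∈ s, A i) = ∑ i ∈ s, v ᵥ* A i := by
  classical
  induction s using Finset.induction with
  | empty => simp [Matrix.vecMul_zero]
  | insert _ _ h ih => simp [Finset.sum_insert h, Matrix.vecMul_add, ih]

private lemma vecMul_smulMat {n k : ℕ} (v : Fin n → ℝ) (c : ℝ)
    (M : Matrix (Fin n) (Fin k) ℝ) : v ᵥ* (c • M) = c • (v ᵥ* M) := by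
  ext i
  simp [Matrix.vecMul, dotProduct, Finset.mul_sum, mul_left_comm]

private lemma dotProduct_self_nonneg' {n : ℕ} (v : Fin n → ℝ) : 0 ≤ v ⬝ᵥ v :=
  Finset.sum_nonneg fun i _ => mul_self_nonneg _

private lemma vecMul_pow_eq_zero {n : ℕ} (v : Fin n → ℝ) (M : Matrix (Fin n) (Fin n) ℝ)
    (hvM : v ᵥ* M = 0) : ∀ l, 1 ≤ l → v ᵥ* (M ^ l) = 0 := by
  intro l hl
  obtain ⟨k, rfl⟩ := Nat.exists_eq_add_of_le hl
  rw [add_comm, pow_succ', ← Matrix.vecMul_vecMul, hvM, Matrix.zero_vecMul]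

private lemma vecMul_scFilter {m n p : ℕ} (B₁ : Matrix (Fin m) (Fin n) ℝ)
    (B₂ : Matrix (Fin n) (Fin p) ℝ) (L₁ L₂ : ℕ) (α β : ℕ → ℝ)
    (v : Fin n → ℝ) (h1 : v ᵥ* (B₁ᵀ * B₁) = 0) (h2 : v ᵥ* (B₂ * B₂ᵀ) = 0) :
    v ᵥ* scFilter B₁ B₂ L₁ L₂ α β = (α 0 + β 0) • v := by
  unfold scFilter
  rw [Matrix.vecMul_add, vecMul_sum', vecMul_sum']
  have key : ∀ (M : Matrix (Fin n) (Fin n) ℝ) (γ : ℕ → ℝ) (L : ℕ), v ᵥ* M = 0 →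
      ∑ l ∈ Finset.range (L + 1), v ᵥ* (γ l • M ^ l) = γ 0 • v := by
    intro M γ L hM
    rw [Finset.sum_eq_single 0]
    · rw [pow_zero, vecMul_smulMat, Matrix.vecMul_one]
    · intro l _ hl
      rw [vecMul_smulMat, vecMul_pow_eq_zero v M hM l (Nat.one_le_iff_ne_zero.mpr hl),
        smul_zero]
    · simp
  rw [key _ _ _ h1, key _ _ _ h2, add_smul]

theorem filter_bank_harmonic_response
    {m n p : ℕ} (B₁ : Matrix (Fin m) (Fin n) ℝ) (B₂ : Matrix (Fin n) (Fin p) ℝ)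
    (hB : B₁ * B₂ = 0) (L₁ L₂ : ℕ)
    (α₀ β₀ α₁ β₁ α₂ β₂ : ℕ → ℝ)
    (x0 : Fin m → ℝ) (x1 : Fin n → ℝ) (x2 : Fin p → ℝ)
    (v : Fin n → ℝ) (hv : (B₁ᵀ * B₁ + B₂ * B₂ᵀ).mulVec v = 0) :
    v ⬝ᵥ ((scFilter B₁ B₂ L₁ L₂ α₀ β₀).mulVec (B₁ᵀ.mulVec x0)
        + (scFilter B₁ B₂ L₁ L₂ α₁ β₁).mulVec x1
        + (scFilter B₁ B₂ L₁ L₂ α₂ β₂).mulVec (B₂.mulVec x2)) =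
      (α₁ 0 + β₁ 0) * (v ⬝ᵥ x1) := by
  have e1 : v ⬝ᵥ ((B₁ᵀ * B₁) *ᵥ v) = (B₁ *ᵥ v) ⬝ᵥ (B₁ *ᵥ v) := by
    rw [← Matrix.mulVec_mulVec, Matrix.dotProduct_mulVec, Matrix.vecMul_transpose]
  have e2 : v ⬝ᵥ ((B₂ * B₂ᵀ) *ᵥ v) = (B₂ᵀ *ᵥ v) ⬝ᵥ (B₂ᵀ *ᵥ v) := by
    rw [← Matrix.mulVec_mulVec, Matrix.dotProduct_mulVec, ← Matrix.mulVec_transpose]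
  have hexp : (B₁ *ᵥ v) ⬝ᵥ (B₁ *ᵥ v) + (B₂ᵀ *ᵥ v) ⬝ᵥ (B₂ᵀ *ᵥ v) = 0 := by
    rw [← e1, ← e2, ← dotProduct_add, ← Matrix.add_mulVec, hv, dotProduct_zero]
  have n1 := dotProduct_self_nonneg' (B₁ *ᵥ v)
  have n2 := dotProduct_self_nonneg' (B₂ᵀ *ᵥ v)
  have h1 : B₁ *ᵥ v = 0 := by rw [← dotProduct_self_eq_zero]; linarith
  have h2 : B₂ᵀ *ᵥ v = 0 := by rw [← dotProduct_self_eq_zero]; linarith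
  have hv1 : v ᵥ* B₁ᵀ = 0 := by rw [Matrix.vecMul_transpose]; exact h1
  have hv2 : v ᵥ* B₂ = 0 := by rw [← Matrix.mulVec_transpose]; exact h2
  have hM1 : v ᵥ* (B₁ᵀ * B₁) = 0 := by
    rw [← Matrix.vecMul_vecMul, hv1, Matrix.zero_vecMul]
  have hM2 : v ᵥ* (B₂ * B₂ᵀ) = 0 := by
    rw [← Matrix.vecMul_vecMul, hv2, Matrix.zero_vecMul]
  have t0 : v ⬝ᵥ (scFilter B₁ B₂ L₁ L₂ α₀ β₀).mulVec (B₁ᵀ.mulVec x0) = 0 := by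
    rw [Matrix.dotProduct_mulVec, vecMul_scFilter _ _ _ _ _ _ _ hM1 hM2,
      smul_dotProduct, Matrix.dotProduct_mulVec, hv1, zero_dotProduct, smul_zero]
  have t1 : v ⬝ᵥ (scFilter B₁ B₂ L₁ L₂ α₁ β₁).mulVec x1 = (α₁ 0 + β₁ 0) * (v ⬝ᵥ x1) := by
    rw [Matrix.dotProduct_mulVec, vecMul_scFilter _ _ _ _ _ _ _ hM1 hM2,
      smul_dotProduct, smul_eq_mul]
  have t2 : v ⬝ᵥ (scFilter B₁ B₂ L₁ L₂ α₂ β₂).mulVec (B₂.mulVec x2) = 0 := by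
    rw [Matrix.dotProduct_mulVec, vecMul_scFilter _ _ _ _ _ _ _ hM1 hM2,
      smul_dotProduct, Matrix.dotProduct_mulVec, hv2, zero_dotProduct, smul_zero]
  rw [dotProduct_add, dotProduct_add, t0, t1, t2, zero_add, add_zero]
end

section
/- Let B₁ be a real m×n matrix and B₂ be a real n×p matrix with B₁B₂ = 0, let L = B₁ᵀB₁ + B₂B₂ᵀ, let H₀, H₁, H₂ be simplicial convolutional filters built from B₁, B₂ with coefficient sets (α_{i,0},…,α_{i,L₁}; β_{i,0},…,β_{i,L₂}) for i = 0,1,2, and for inputs x⁰ ∈ ℝᵐ, x¹ ∈ ℝⁿ, x² ∈ ℝᵖ let y = H₀B₁ᵀx⁰ + H₁x¹ + H₂B₂x² be the filter-bank output. If v ∈ ℝⁿ is a curl eigenvector, i.e. v = B₂z for some z ∈ ℝᵖ and Lv = λ·v, then vᵀy = (α_{1,0} + Σ_{l=0}^{L₂} β_{1,l} λ^l)·(vᵀx¹) + (α_{2,0} + Σ_{l=0}^{L₂} β_{2,l} λ^l)·(vᵀB₂x²); in particular the lower-adjacent signal x⁰ does not contribute at curl frequencies. -/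
/-!
Since `B₁B₂ = 0`, a curl eigenvector `v = B₂z` lies in the kernel of `B₁`, so the lower Laplacian
`B₁ᵀB₁` kills it and `v` is an eigenvector of the upper Laplacian `B₂B₂ᵀ` alone. Every filter `H`
is symmetric, hence `vᵀHw = (Hv)ᵀw`, and on `v` only the zeroth lower power survives, giving
`Hv = (α₀ + Σ βₗλˡ) v`. The lower-adjacent input drops out because `vᵀB₁ᵀx⁰ = (B₁v)ᵀx⁰ = 0`.
-/

open Matrix Finset

section

variable {ι R : Type*} [Fintype ι] [CommSemiring R]

theorem Matrix.pow_mulVec_of_mulVec_eq_smul_s19 [DecidableEq ι] {M : Matrix ι ι R} {v : ι → R}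
    {c : R} (h : M *ᵥ v = c • v) (l : ℕ) : (M ^ l) *ᵥ v = c ^ l • v := by
  induction l with
  | zero => simp
  | succ l ih => rw [pow_succ, ← mulVec_mulVec, h, mulVec_smul, ih, smul_smul, pow_succ']

theorem Matrix.IsSymm.dotProduct_mulVec_comm {M : Matrix ι ι R} (hM : M.IsSymm) (v w : ι → R) :
    v ⬝ᵥ M *ᵥ w = M *ᵥ v ⬝ᵥ w := by
  rw [dotProduct_mulVec, ← vecMul_transpose, hM.eq]

end

section

variable {m n p : ℕ} {B₁ : Matrix (Fin m) (Fin n) ℝ} {B₂ : Matrix (Fin n) (Fin p) ℝ}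

theorem isSymm_scFilter (L₁ L₂ : ℕ) (α β : ℕ → ℝ) : (scFilter B₁ B₂ L₁ L₂ α β).IsSymm := by
  have hlow : (B₁ᵀ * B₁).IsSymm := by simp [IsSymm, transpose_mul]
  have hup : (B₂ * B₂ᵀ).IsSymm := by simp [IsSymm, transpose_mul]
  simp only [scFilter, IsSymm, transpose_add, transpose_sum, transpose_smul, (hlow.pow _).eq,
    (hup.pow _).eq]

theorem scFilter_mulVec_eq_smul_of_mulVec_eq_zero {v : Fin n → ℝ} {lam : ℝ}
    (hlow : B₁ *ᵥ v = 0) (hup : (B₂ * B₂ᵀ) *ᵥ v = lam • v) (L₁ L₂ : ℕ) (α β : ℕ → ℝ) :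
    scFilter B₁ B₂ L₁ L₂ α β *ᵥ v = (α 0 + ∑ l ∈ range (L₂ + 1), β l * lam ^ l) • v := by
  have hlow_pow (l : ℕ) : ((B₁ᵀ * B₁) ^ (l + 1)) *ᵥ v = 0 := by
    rw [pow_succ, ← mulVec_mulVec, ← mulVec_mulVec, hlow, mulVec_zero, mulVec_zero]
  simp only [scFilter, add_mulVec, sum_mulVec, smul_mulVec, sum_range_succ' _ L₁, hlow_pow,
    smul_zero, sum_const_zero, zero_add, pow_zero, one_mulVec, pow_mulVec_of_mulVec_eq_smul_s19 hup,
    add_smul, sum_smul, mul_smul]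

theorem dotProduct_scFilter_mulVec_of_mulVec_eq_zero {v : Fin n → ℝ} {lam : ℝ}
    (hlow : B₁ *ᵥ v = 0) (hup : (B₂ * B₂ᵀ) *ᵥ v = lam • v) (L₁ L₂ : ℕ) (α β : ℕ → ℝ)
    (w : Fin n → ℝ) :
    v ⬝ᵥ scFilter B₁ B₂ L₁ L₂ α β *ᵥ w
      = (α 0 + ∑ l ∈ range (L₂ + 1), β l * lam ^ l) * (v ⬝ᵥ w) := by
  rw [(isSymm_scFilter L₁ L₂ α β).dotProduct_mulVec_comm,
    scFilter_mulVec_eq_smul_of_mulVec_eq_zero hlow hup, smul_dotProduct, smul_eq_mul]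

end

theorem filter_bank_curl_response
    {m n p : ℕ} (B₁ : Matrix (Fin m) (Fin n) ℝ) (B₂ : Matrix (Fin n) (Fin p) ℝ)
    (hB : B₁ * B₂ = 0) (L₁ L₂ : ℕ)
    (α₀ β₀ α₁ β₁ α₂ β₂ : ℕ → ℝ)
    (x0 : Fin m → ℝ) (x1 : Fin n → ℝ) (x2 : Fin p → ℝ)
    (v : Fin n → ℝ) (z : Fin p → ℝ) (hv : v = B₂.mulVec z) (lam : ℝ)
    (heig : (B₁ᵀ * B₁ + B₂ * B₂ᵀ).mulVec v = lam • v) :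
    v ⬝ᵥ ((scFilter B₁ B₂ L₁ L₂ α₀ β₀).mulVec (B₁ᵀ.mulVec x0)
        + (scFilter B₁ B₂ L₁ L₂ α₁ β₁).mulVec x1
        + (scFilter B₁ B₂ L₁ L₂ α₂ β₂).mulVec (B₂.mulVec x2)) =
      (α₁ 0 + ∑ l ∈ Finset.range (L₂ + 1), β₁ l * lam ^ l) * (v ⬝ᵥ x1)
        + (α₂ 0 + ∑ l ∈ Finset.range (L₂ + 1), β₂ l * lam ^ l) * (v ⬝ᵥ B₂.mulVec x2) := by
  have hlow : B₁ *ᵥ v = 0 := by rw [hv, mulVec_mulVec, hB, zero_mulVec]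
  have hup : (B₂ * B₂ᵀ) *ᵥ v = lam • v := by
    rwa [add_mulVec, ← mulVec_mulVec, hlow, mulVec_zero, zero_add] at heig
  have hx0 : v ⬝ᵥ B₁ᵀ *ᵥ x0 = 0 := by
    rw [dotProduct_mulVec, vecMul_transpose, hlow, zero_dotProduct]
  simp only [dotProduct_add, dotProduct_scFilter_mulVec_of_mulVec_eq_zero hlow hup, hx0,
    mul_zero, zero_add]
end
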